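/- arXiv:1902.04795 — 4 statements merged into one kernel-verified Lean document; each statement's English description precedes it below -/
import Mathlib

section
/- Let ε be a unit in the ring of integers O of a real quadratic field K, p an odd prime unramified in K with residue degree r, and suppose p does not divide (ε - ε̄)². If the generalized Fibonacci sequence is defined by F₀ = 0, F₁ = 1, F_{n+2} = (ε + ε̄)F_{n+1} - N(ε)F_n, and p splits in K (r = 1), then ε^{p-1} - 1 ≢ 0 mod p² if and only if F_{p-1} ≢ 0 mod p². -/
/-!
By the Binet formula,
`F_{p-1} (ε - ε̄) ε^{p-1} = ε^{2(p-1)} - N(ε)^{p-1} = (ε^{p-1} + 1)(ε^{p-1} - 1)`,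
because `N(ε) = ±1` and `p - 1` is even. As `p` splits, `pO = PQ` with `O/P ≅ O/Q ≅ 𝔽_p`,
so `p² ∣ x` iff `x ∈ P² ∩ Q²`. At `R ∈ {P, Q}`, Fermat gives `ε^{p-1} ≡ 1`, so
`ε^{p-1} + 1 ≡ 2 ∉ R`, and `ε - ε̄ ∉ R` because `(ε - ε̄)²` is a rational integer prime to `p`.
Cancelling these factors of the identity, `ε^{p-1} - 1 ∈ R²` iff `F_{p-1} ∈ R²`.
-/

open NumberField Module IntermediateField

section LucasSequence

variable {R : Type*} [CommRing R] {a b : R} {F : ℕ → R} (h0 : F 0 = 0) (h1 : F 1 = 1)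
  (hrec : ∀ n, F (n + 2) = (a + b) * F (n + 1) - (a * b) * F n)
include h0 h1 hrec

theorem mul_sub_eq_pow_sub_pow (n : ℕ) : F n * (a - b) = a ^ n - b ^ n := by
  induction n using Nat.twoStepInduction with
  | zero => rw [h0]; ring
  | one => rw [h1]; ring
  | more n ih ih' => rw [hrec]; linear_combination (a + b) * ih' - a * b * ih

theorem mul_sub_mul_pow_eq {n : ℕ} (hn : (a * b) ^ n = 1) :
    F n * ((a - b) * a ^ n) = (a ^ n + 1) * (a ^ n - 1) := by
  linear_combination a ^ n * mul_sub_eq_pow_sub_pow h0 h1 hrec n - hn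

end LucasSequence

section QuadraticExtension

variable {F L : Type*} [Field F] [Field L] [Algebra F L]

theorem finrank_fixedField_zpowers_mul_orderOf [FiniteDimensional F L] (σ : L ≃ₐ[F] L) :
    finrank F (fixedField (Subgroup.zpowers σ)) * orderOf σ = finrank F L := by
  rw [← Nat.card_zpowers, ← finrank_fixedField_eq_card, finrank_mul_finrank]

variable {σ : L ≃ₐ[F] L} (h2 : finrank F L = 2) (hσ : σ ≠ 1)
include h2 hσ

theorem finrank_fixedField_zpowers_eq_one_and_orderOf_eq_two :
    finrank F (fixedField (Subgroup.zpowers σ)) = 1 ∧ orderOf σ = 2 := by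
  have : FiniteDimensional F L := .of_finrank_eq_succ h2
  have hprod := finrank_fixedField_zpowers_mul_orderOf σ
  have hpos : 0 < finrank F (fixedField (Subgroup.zpowers σ)) := finrank_pos
  have hord : 2 ≤ orderOf σ := by
    have h0 : orderOf σ ≠ 0 := (isOfFinOrder_of_finite σ).orderOf_pos.ne'
    have h1 : orderOf σ ≠ 1 := by rwa [Ne, orderOf_eq_one_iff]
    omega
  rw [h2] at hprod
  constructor <;> nlinarith

theorem AlgEquiv.apply_apply_eq_self_of_finrank_eq_two (z : L) : σ (σ z) = z := by
  have : σ ^ 2 = 1 := by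
    rw [← (finrank_fixedField_zpowers_eq_one_and_orderOf_eq_two h2 hσ).2]
    exact pow_orderOf_eq_one σ
  exact congrArg (· z) this

theorem mem_bot_of_apply_eq_self_of_finrank_eq_two {z : L} (hz : σ z = z) :
    z ∈ (⊥ : IntermediateField F L) := by
  rw [← finrank_eq_one_iff.mp (finrank_fixedField_zpowers_eq_one_and_orderOf_eq_two h2 hσ).1]
  intro g
  have hst : σ ∈ MulAction.stabilizer (L ≃ₐ[F] L) z := hz
  exact Subgroup.zpowers_le.mpr hst g.2

end QuadraticExtension

namespace NumberField.RingOfIntegers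

variable {K : Type*} [Field K] [NumberField K]

theorem exists_intCast_eq_of_coe_mem_bot {z : 𝓞 K} (hz : (z : K) ∈ (⊥ : IntermediateField ℚ K)) :
    ∃ m : ℤ, (m : 𝓞 K) = z := by
  obtain ⟨q, hq⟩ := mem_bot.mp hz
  have hqint : IsIntegral ℤ q := by
    rw [← isIntegral_algebraMap_iff (algebraMap ℚ K).injective, hq]
    exact z.2
  obtain ⟨m, rfl⟩ := IsIntegrallyClosed.isIntegral_iff.mp hqint
  exact ⟨m, RingOfIntegers.ext (by simpa using hq)⟩

theorem isUnit_intCast_iff {m : ℤ} : IsUnit (m : 𝓞 K) ↔ IsUnit m := by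
  simpa using isUnit_map_iff (algebraMap ℤ (𝓞 K)) m

end NumberField.RingOfIntegers

section RealQuadraticUnits

open RingOfIntegers

variable {K : Type*} [Field K] [NumberField K] (hdeg : finrank ℚ K = 2) {σ : K ≃ₐ[ℚ] K}
  (hσ : σ ≠ 1) {ε εb : 𝓞 K} (hconj : (εb : K) = σ ε)
include hdeg hσ hconj

theorem apply_conj_eq : σ (εb : K) = ε := by
  rw [hconj, AlgEquiv.apply_apply_eq_self_of_finrank_eq_two hdeg hσ]

theorem exists_intCast_eq_mul_conj : ∃ m : ℤ, (m : 𝓞 K) = ε * εb := by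
  refine exists_intCast_eq_of_coe_mem_bot (mem_bot_of_apply_eq_self_of_finrank_eq_two hdeg hσ ?_)
  push_cast
  rw [map_mul, ← hconj, apply_conj_eq hdeg hσ hconj, mul_comm]

theorem exists_intCast_eq_sub_conj_sq : ∃ m : ℤ, (m : 𝓞 K) = (ε - εb) ^ 2 := by
  refine exists_intCast_eq_of_coe_mem_bot (mem_bot_of_apply_eq_self_of_finrank_eq_two hdeg hσ ?_)
  push_cast
  rw [map_pow, map_sub, ← hconj, apply_conj_eq hdeg hσ hconj]
  ring

theorem mul_conj_sq_eq_one (hε : IsUnit ε) : (ε * εb) ^ 2 = 1 := by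
  have hεb : IsUnit εb := by
    have : εb = mapRingEquiv σ.toRingEquiv ε := RingOfIntegers.ext hconj
    exact this ▸ hε.map _
  obtain ⟨m, hm⟩ := exists_intCast_eq_mul_conj hdeg hσ hconj
  have hmu : IsUnit m := isUnit_intCast_iff.mp (hm ▸ hε.mul hεb)
  rw [← hm, ← Int.cast_pow, Int.isUnit_sq hmu, Int.cast_one]

end RealQuadraticUnits

namespace Ideal

variable {A : Type*} [CommRing A]

theorem dvd_pow_iff_mem_pow_and_mem_pow {c y : A} {P Q : Ideal A} [P.IsMaximal] [Q.IsMaximal]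
    (hPQ : P ≠ Q) (hc : span {c} = P * Q) (n : ℕ) : c ^ n ∣ y ↔ y ∈ P ^ n ∧ y ∈ Q ^ n := by
  have hcop : P ^ n ⊔ Q ^ n = ⊤ :=
    isCoprime_iff_sup_eq.mp ((isCoprime_iff_sup_eq.mpr (IsMaximal.coprime_of_ne ‹_› ‹_› hPQ)).pow)
  rw [← mem_span_singleton, ← span_singleton_pow, hc, mul_pow, mul_eq_inf_of_coprime hcop,
    Submodule.mem_inf]

theorem intCast_mem_iff_of_natCard_quotient {R : Ideal A} {p : ℕ} (hp : p.Prime)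
    (hcard : Nat.card (A ⧸ R) = p) (m : ℤ) : (m : A) ∈ R ↔ (p : ℤ) ∣ m := by
  have : Fact p.Prime := ⟨hp⟩
  have : Finite (A ⧸ R) := Nat.finite_of_card_ne_zero (hcard ▸ hp.ne_zero)
  have : Fintype (A ⧸ R) := Fintype.ofFinite _
  have : CharP (A ⧸ R) p := charP_of_card_eq_prime (by rw [← Nat.card_eq_fintype_card, hcard])
  rw [← Quotient.eq_zero_iff_mem, map_intCast, CharP.intCast_eq_zero_iff]

theorem natCard_quotient_eq_of_span_eq_mul [IsDedekindDomain A] [Free ℤ A] [Module.Finite ℤ A]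
    (hrank : finrank ℤ A = 2) {p : ℕ} (hp : p.Prime) {P Q : Ideal A} (hP : P ≠ ⊤) (hQ : Q ≠ ⊤)
    (h : span {(p : A)} = P * Q) : Nat.card (A ⧸ P) = p := by
  have hnorm := absNorm_span_natCast (S := A) p
  rw [h, map_mul, hrank] at hnorm
  rw [← Submodule.cardQuot_apply, ← absNorm_apply]
  exact ((hp.mul_eq_prime_sq_iff (absNorm_eq_one_iff.not.mpr hP)
    (absNorm_eq_one_iff.not.mpr hQ)).mp hnorm).1

variable {R : Ideal A} [R.IsPrime]

theorem IsPrime.mul_mem_pow_iff [IsDedekindDomain A] {a b : A} (ha : a ∉ R) (n : ℕ) :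
    a * b ∈ R ^ n ↔ b ∈ R ^ n :=
  ⟨fun h => (IsPrime.mul_mem_pow R h).resolve_left ha, mul_mem_left _ a⟩

theorem IsPrime.isMaximal_of_natCard_quotient_ne_zero (h : Nat.card (A ⧸ R) ≠ 0) :
    R.IsMaximal :=
  have := Nat.finite_of_card_ne_zero h
  Quotient.maximal_of_isField R (Finite.isField_of_domain _)

theorem pow_natCard_quotient_sub_one_sub_one_mem [Finite (A ⧸ R)] {z : A} (hz : z ∉ R) :
    z ^ (Nat.card (A ⧸ R) - 1) - 1 ∈ R := by
  have := IsPrime.isMaximal_of_natCard_quotient_ne_zero (R := R) Nat.card_pos.ne'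
  let := Quotient.field R
  have := Fintype.ofFinite (A ⧸ R)
  rw [Nat.card_eq_fintype_card, ← Quotient.eq_zero_iff_mem, map_sub, map_pow, map_one,
    FiniteField.pow_card_sub_one_eq_one _ (Quotient.eq_zero_iff_mem.not.mpr hz), sub_self]

theorem pow_sub_one_sub_one_mem_pow_iff [IsDedekindDomain A] {p : ℕ} (hp : p.Prime)
    (hodd : p ≠ 2) (hcard : Nat.card (A ⧸ R) = p) {ε δ y : A} (hε : ε ∉ R) (hδ : δ ∉ R)
    (h : y * (δ * ε ^ (p - 1)) = (ε ^ (p - 1) + 1) * (ε ^ (p - 1) - 1)) (n : ℕ) :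
    ε ^ (p - 1) - 1 ∈ R ^ n ↔ y ∈ R ^ n := by
  have : Finite (A ⧸ R) := Nat.finite_of_card_ne_zero (hcard ▸ hp.ne_zero)
  have hx : ε ^ (p - 1) - 1 ∈ R := hcard ▸ pow_natCard_quotient_sub_one_sub_one_mem hε
  have h2 : (2 : A) ∉ R := by
    rw [← Int.cast_two, intCast_mem_iff_of_natCard_quotient hp hcard]
    exact fun hdvd =>
      hodd ((Nat.prime_dvd_prime_iff_eq hp Nat.prime_two).mp (by exact_mod_cast hdvd))
  have hv : ε ^ (p - 1) + 1 ∉ R := fun hv => h2 (by convert R.sub_mem hv hx using 1; ring)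
  have hu : δ * ε ^ (p - 1) ∉ R := IsPrime.mul_notMem ‹_› hδ (hε ∘ IsPrime.mem_of_pow_mem ‹_› _)
  rw [← IsPrime.mul_mem_pow_iff hv, ← h, mul_comm, IsPrime.mul_mem_pow_iff hu]

end Ideal

theorem wieferich_iff_fibonacci_split_general
    (K : Type*) [Field K] [NumberField K]
    (hdeg : Module.finrank ℚ K = 2)
    (σ : K ≃ₐ[ℚ] K) (hσ : σ ≠ AlgEquiv.refl)
    (ε εb : 𝓞 K) (hε : IsUnit ε) (hconj : (εb : K) = σ (ε : K))
    (p : ℕ) (hp : p.Prime) (hodd : p ≠ 2)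
    (hsplit : ∃ P Q : Ideal (𝓞 K), P.IsPrime ∧ Q.IsPrime ∧ P ≠ Q ∧
      Ideal.span {(p : 𝓞 K)} = P * Q)
    (hnd : ¬ (p : 𝓞 K) ∣ (ε - εb) ^ 2)
    (F : ℕ → 𝓞 K) (h0 : F 0 = 0) (h1 : F 1 = 1)
    (hrec : ∀ n, F (n + 2) = (ε + εb) * F (n + 1) - (ε * εb) * F n) :
    ¬ ((p : 𝓞 K) ^ 2 ∣ ε ^ (p - 1) - 1) ↔ ¬ ((p : 𝓞 K) ^ 2 ∣ F (p - 1)) := by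
  obtain ⟨P, Q, hP, hQ, hPQ, hspan⟩ := hsplit
  have hkey : F (p - 1) * ((ε - εb) * ε ^ (p - 1)) = (ε ^ (p - 1) + 1) * (ε ^ (p - 1) - 1) := by
    refine mul_sub_mul_pow_eq h0 h1 hrec ?_
    obtain ⟨k, hk⟩ := hp.even_sub_one hodd
    rw [hk, ← two_mul, pow_mul, mul_conj_sq_eq_one hdeg hσ hconj hε, one_pow]
  obtain ⟨d, hd⟩ := exists_intCast_eq_sub_conj_sq hdeg hσ hconj
  have hlocal (R : Ideal (𝓞 K)) [R.IsPrime] (hcard : Nat.card (𝓞 K ⧸ R) = p) :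
      ε ^ (p - 1) - 1 ∈ R ^ 2 ↔ F (p - 1) ∈ R ^ 2 := by
    have hδ : ε - εb ∉ R := fun hδ => hnd <| by
      have hdvd := (Ideal.intCast_mem_iff_of_natCard_quotient hp hcard d).mp
        (hd ▸ R.pow_mem_of_mem hδ 2 two_pos)
      exact hd ▸ (by exact_mod_cast Int.cast_dvd_cast _ _ hdvd)
    exact Ideal.pow_sub_one_sub_one_mem_pow_iff hp hodd hcard
      (fun h => Ideal.IsPrime.ne_top ‹_› (R.eq_top_of_isUnit_mem h hε)) hδ hkey 2
  have hrank : finrank ℤ (𝓞 K) = 2 := (RingOfIntegers.rank K).trans hdeg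
  have hPcard := Ideal.natCard_quotient_eq_of_span_eq_mul hrank hp hP.ne_top hQ.ne_top hspan
  have hQcard := Ideal.natCard_quotient_eq_of_span_eq_mul hrank hp hQ.ne_top hP.ne_top
    (hspan.trans (mul_comm P Q))
  have := Ideal.IsPrime.isMaximal_of_natCard_quotient_ne_zero (hPcard ▸ hp.ne_zero)
  have := Ideal.IsPrime.isMaximal_of_natCard_quotient_ne_zero (hQcard ▸ hp.ne_zero)
  rw [not_iff_not, Ideal.dvd_pow_iff_mem_pow_and_mem_pow hPQ hspan,
    Ideal.dvd_pow_iff_mem_pow_and_mem_pow hPQ hspan, hlocal P hPcard, hlocal Q hQcard]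

/-- `K` a real quadratic field with ring of integers `𝓞 K`,
`ε` a unit with Galois conjugate `ε̄`, `p` an odd prime splitting in `K`
(residue degree `r = 1`) with `p ∤ (ε - ε̄)²`, and `F` the generalized
Fibonacci sequence `F₀ = 0, F₁ = 1, F_{n+2} = (ε+ε̄)F_{n+1} - N(ε)F_n`.
Then `ε^{p-1} - 1 ≢ 0 (mod p²)` iff `F_{p-1} ≢ 0 (mod p²)`. -/
theorem wieferich_iff_fibonacci_split
    (K : Type*) [Field K] [NumberField K]
    (hdeg : Module.finrank ℚ K = 2) (f : K →+* ℝ)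
    (σ : K ≃ₐ[ℚ] K) (hσ : σ ≠ AlgEquiv.refl)
    (ε εb : 𝓞 K) (hε : IsUnit ε) (hconj : (εb : K) = σ (ε : K))
    (p : ℕ) (hp : p.Prime) (hodd : p ≠ 2)
    (hsplit : ∃ P Q : Ideal (𝓞 K), P.IsPrime ∧ Q.IsPrime ∧ P ≠ Q ∧
      Ideal.span {(p : 𝓞 K)} = P * Q)
    (hnd : ¬ (p : 𝓞 K) ∣ (ε - εb) ^ 2)
    (F : ℕ → 𝓞 K) (h0 : F 0 = 0) (h1 : F 1 = 1)
    (hrec : ∀ n, F (n + 2) = (ε + εb) * F (n + 1) - (ε * εb) * F n) :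
    ¬ ((p : 𝓞 K) ^ 2 ∣ ε ^ (p - 1) - 1) ↔ ¬ ((p : 𝓞 K) ^ 2 ∣ F (p - 1)) :=
  wieferich_iff_fibonacci_split_general K hdeg σ hσ ε εb hε hconj p hp hodd hsplit hnd F h0 h1 hrec
end

section
/- Let ε be a unit in the ring of integers O of a real quadratic field K = Q(√d), and p ≥ 5 a prime inert in K with p not dividing (ε - ε̄)². Define F_n = (εⁿ - ε̄ⁿ)/(ε - ε̄). Then ε^{p²-1} - 1 ≢ 0 mod p² if and only if F_{p+1} ≢ 0 mod p². -/
/-!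
Modulo the inert prime `p`, `𝓞 K ⧸ (p)` is a field of characteristic `p` in which `ε ^ p` is
again a root of `X ^ 2 - (ε + ε̄) X + ε ε̄ ∈ ℤ[X]`. It cannot be `ε`: Frobenius fixes only residues
of integers, and `ε ≡ a` would give `ε̄ ≡ a` by conjugation, i.e. `p ∣ ε - ε̄`. Hence `ε ^ p ≡ ε̄`
and `ε̄ ^ p ≡ ε`, so `u = ε ^ (p + 1)` and `v = ε̄ ^ (p + 1)` are both `≡ n = ε ε̄ = ±1 (mod p)`,
with `u v = 1`. Modulo `p²`, the binomial expansion of `(n + (u - n)) ^ (p - 1)` gives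
`ε ^ (p² - 1) ≡ 1 ↔ u ≡ n`, the identity `u - v - 2 (u - n) = n (u - n) (v - n)` gives
`u ≡ n ↔ u ≡ v`, and `u - v = (ε - ε̄) F (p + 1)` with `ε - ε̄` prime to `p`.
-/

open NumberField Polynomial

theorem Prime.pow_dvd_mul_iff_of_not_dvd {M : Type*} [CommMonoidWithZero M] [IsCancelMulZero M]
    {p a b : M} (hp : Prime p) (n : ℕ) (h : ¬ p ∣ a) : p ^ n ∣ a * b ↔ p ^ n ∣ b :=
  ⟨hp.pow_dvd_of_dvd_mul_left n h, (Dvd.dvd.mul_left · a)⟩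

theorem natCast_not_dvd_of_dvd_sub_one {R : Type*} [CommRing R] {p m : ℕ} (hp : ¬ IsUnit (p : R))
    (hp0 : p ≠ 0) (hm : m ∣ p - 1) : ¬ (p : R) ∣ m := by
  intro h
  have hpred : (p : R) ∣ ((p - 1 : ℕ) : R) := h.trans (Nat.cast_dvd_cast hm)
  have hone : (p : R) - ((p - 1 : ℕ) : R) = 1 := by
    rw [Nat.cast_sub (Nat.one_le_iff_ne_zero.2 hp0)]
    ring
  exact hp (isUnit_of_dvd_one (hone ▸ dvd_sub dvd_rfl hpred))

section SquareDivisibility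

variable {R : Type*} [CommRing R] [IsDomain R] {P u v n : R}

theorem sq_dvd_sub_iff_sq_dvd_sub_of_mul_eq_one (hP : Prime P) (h2 : ¬ P ∣ 2)
    (huv : u * v = 1) (hn : n ^ 2 = 1) (hu : P ∣ u - n) (hv : P ∣ v - n) :
    P ^ 2 ∣ u - v ↔ P ^ 2 ∣ u - n := by
  have key : (u - v) - 2 * (u - n) = n * ((u - n) * (v - n)) := by
    linear_combination (-n) * huv + (u + v - n) * hn
  rw [← hP.pow_dvd_mul_iff_of_not_dvd 2 h2 (b := u - n)]
  refine dvd_iff_dvd_of_dvd_sub ?_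
  rw [key, pow_two]
  exact (mul_dvd_mul hu hv).mul_left n

theorem sq_dvd_pow_sub_one_iff_sq_dvd_sub (hP : Prime P) (hn : n ^ 2 = 1)
    (hu : P ∣ u - n) {m : ℕ} (hm : Even m) (hmP : ¬ P ∣ (m : R)) :
    P ^ 2 ∣ u ^ m - 1 ↔ P ^ 2 ∣ u - n := by
  have hnm : n ^ m = 1 := by
    obtain ⟨k, rfl⟩ := hm
    rw [← two_mul, pow_mul, hn, one_pow]
  have hbinom := sq_dvd_add_pow_sub_sub (u - n) n m
  rw [add_sub_cancel, hnm, sub_right_comm] at hbinom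
  rw [dvd_iff_dvd_of_dvd_sub ((pow_dvd_pow_of_dvd hu 2).trans hbinom), mul_right_comm]
  have hunit : IsUnit (n ^ (m - 1)) := (IsUnit.of_pow_eq_one hn two_ne_zero).pow _
  exact hP.pow_dvd_mul_iff_of_not_dvd 2 fun h => hmP (hunit.dvd_mul_left.mp h)

end SquareDivisibility

theorem natCast_dvd_pow_sub_conj {R : Type*} [CommRing R] {p : ℕ} [Fact p.Prime]
    [(Ideal.span {(p : R)}).IsMaximal] (g : R →+* R) {x y : R} (hgx : g x = y) {T N : ℤ}
    (hT : x + y = T) (hN : x * y = N) (hxy : ¬ (p : R) ∣ x - y) : (p : R) ∣ x ^ p - y := by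
  set I := Ideal.span {(p : R)}
  let := Ideal.Quotient.field I
  have hmk : ∀ z, Ideal.Quotient.mk I z = 0 ↔ (p : R) ∣ z := fun z => by
    rw [Ideal.Quotient.eq_zero_iff_mem, Ideal.mem_span_singleton]
  have : CharP (R ⧸ I) p :=
    (CharP.charP_iff_prime_eq_zero Fact.out).2 (by simpa using (hmk p).2 dvd_rfl)
  set x' := Ideal.Quotient.mk I x
  set y' := Ideal.Quotient.mk I y
  have hT' : x' + y' = T := by simpa using congrArg (Ideal.Quotient.mk I) hT
  have hN' : x' * y' = N := by simpa using congrArg (Ideal.Quotient.mk I) hN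
  have hroot : (x' ^ p - x') * (x' ^ p - y') = 0 := by
    have h := congrArg (frobenius (R ⧸ I) p) (show x' ^ 2 - T * x' + N = 0 by
      linear_combination x' * hT' - hN')
    simp only [map_add, map_sub, map_mul, map_pow, map_intCast, frobenius_def, map_zero] at h
    linear_combination h - x' ^ p * hT' + hN'
  rcases mul_eq_zero.1 hroot with hfix | hconj
  · obtain ⟨a, ha⟩ := (mem_bot_iff_intCast p (R ⧸ I)).1
      ((Subfield.mem_bot_iff_pow_eq_self _ p).2 (sub_eq_zero.1 hfix))
    have hxa : (p : R) ∣ x - a := (hmk _).1 (by simp [x', ← ha])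
    have hya : (p : R) ∣ y - a := by simpa [hgx] using map_dvd g hxa
    exact absurd (by simpa using dvd_sub hxa hya) hxy
  · exact (hmk _).1 (by simpa using hconj)

theorem Polynomial.Monic.eq_X_sub_C_mul_X_sub_C {F : Type*} [Field F] {q : F[X]} (hq : q.Monic)
    (hdeg : q.natDegree ≤ 2) {a b : F} (hab : a ≠ b) (ha : q.IsRoot a) (hb : q.IsRoot b) :
    q = (X - C a) * (X - C b) := by
  refine eq_of_monic_of_dvd_of_natDegree_le ((monic_X_sub_C a).mul (monic_X_sub_C b)) hq ?_ ?_
  · exact (isCoprime_X_sub_C_of_isUnit_sub (sub_ne_zero.2 hab).isUnit).mul_dvd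
      (dvd_iff_isRoot.2 ha) (dvd_iff_isRoot.2 hb)
  · rwa [(monic_X_sub_C a).natDegree_mul (monic_X_sub_C b), natDegree_X_sub_C,
      natDegree_X_sub_C]

theorem Int.sq_eq_one_of_isUnit_cast {S : Type*} [CommRing S] [Nontrivial S] [Module.Free ℤ S]
    [Module.Finite ℤ S] {N : ℤ} (h : IsUnit (N : S)) : N ^ 2 = 1 := by
  have hnorm := h.map (Algebra.norm ℤ)
  rw [← eq_intCast (algebraMap ℤ S), Algebra.norm_algebraMap,
    isUnit_pow_iff Module.finrank_pos.ne'] at hnorm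
  exact Int.isUnit_sq hnorm

section QuadraticField

variable {K : Type*} [Field K] [NumberField K] (hdeg : Module.finrank ℚ K = 2) (σ : K ≃ₐ[ℚ] K)
  {x y : 𝓞 K} (hy : (y : K) = σ x)
include hdeg hy

theorem exists_intCast_add_and_mul_of_conj (hxy : x ≠ y) :
    (∃ T : ℤ, x + y = T) ∧ ∃ N : ℤ, x * y = N := by
  have hint : IsIntegral ℤ (x : K) := x.isIntegral_coe
  have hmonic : (minpoly ℤ (x : K)).Monic := minpoly.monic hint
  have hdeg' : (minpoly ℤ (x : K)).natDegree ≤ 2 := by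
    rw [← hdeg, ← hmonic.natDegree_map (algebraMap ℤ ℚ),
      ← minpoly.isIntegrallyClosed_eq_field_fractions' ℚ hint]
    exact minpoly.natDegree_le _
  have hrootx : ((minpoly ℤ (x : K)).map (algebraMap ℤ K)).IsRoot x := by
    rw [IsRoot, eval_map_algebraMap, minpoly.aeval]
  have hrooty : ((minpoly ℤ (x : K)).map (algebraMap ℤ K)).IsRoot y := by
    rw [IsRoot, eval_map_algebraMap, hy, show σ x = σ.toAlgHom.restrictScalars ℤ x from rfl,
      aeval_algHom_apply, minpoly.aeval, map_zero]
  have hq := (hmonic.map (algebraMap ℤ K)).eq_X_sub_C_mul_X_sub_C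
    (natDegree_map_le.trans hdeg') (fun h => hxy (RingOfIntegers.ext h)) hrootx hrooty
  rw [show (X - C (x : K)) * (X - C (y : K)) = X ^ 2 - C (x + y : K) * X + C (x * y : K) by
    rw [C_add, C_mul]; ring] at hq
  have h1 : ((minpoly ℤ (x : K)).coeff 1 : K) = -(x + y : K) := by
    simpa [coeff_X, coeff_C] using congrArg (coeff · 1) hq
  have h0 : ((minpoly ℤ (x : K)).coeff 0 : K) = x * y := by
    simpa [coeff_X, coeff_C] using congrArg (coeff · 0) hq
  exact ⟨⟨-(minpoly ℤ (x : K)).coeff 1, RingOfIntegers.coe_injective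
      (by rw [map_add, map_intCast, Int.cast_neg, h1, neg_neg])⟩,
    ⟨(minpoly ℤ (x : K)).coeff 0, RingOfIntegers.coe_injective
      (by rw [map_mul, map_intCast, h0])⟩⟩

theorem sq_mul_conj_eq_one (hxy : x ≠ y) (hx : IsUnit x) : (x * y) ^ 2 = 1 := by
  obtain ⟨-, N, hN⟩ := exists_intCast_add_and_mul_of_conj hdeg σ hy hxy
  have hσx : RingOfIntegers.mapRingEquiv σ.toRingEquiv x = y := RingOfIntegers.ext hy.symm
  have hyunit : IsUnit y := hσx ▸ hx.map _
  rw [hN]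
  exact_mod_cast Int.sq_eq_one_of_isUnit_cast (hN ▸ hx.mul hyunit)

theorem natCast_dvd_pow_sub_conj_of_isPrime {p : ℕ} [Fact p.Prime]
    (hinert : (Ideal.span {(p : 𝓞 K)}).IsPrime) (hxy : ¬ (p : 𝓞 K) ∣ x - y) :
    (p : 𝓞 K) ∣ x ^ p - y ∧ (p : 𝓞 K) ∣ y ^ p - x := by
  have := hinert.isMaximal (by simp [(Fact.out : p.Prime).ne_zero])
  obtain ⟨⟨T, hT⟩, N, hN⟩ :=
    exists_intCast_add_and_mul_of_conj hdeg σ hy (fun h => hxy (by simp [h]))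
  let σO := RingOfIntegers.mapRingEquiv σ.toRingEquiv
  have hσx : σO x = y := RingOfIntegers.ext hy.symm
  have hσy : σO y = x := by
    have := congrArg σO hT
    rw [map_add, map_intCast, hσx, ← hT, add_comm x] at this
    exact add_left_cancel this
  exact ⟨natCast_dvd_pow_sub_conj σO hσx hT hN hxy,
    natCast_dvd_pow_sub_conj σO hσy (by rwa [add_comm]) (by rwa [mul_comm])
      (by rwa [dvd_sub_comm])⟩

end QuadraticField

theorem wieferich_iff_fibonacci_inert_general
    (K : Type*) [Field K] [NumberField K]
    (hdeg : Module.finrank ℚ K = 2)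
    (σ : K ≃ₐ[ℚ] K)
    (ε εb : 𝓞 K) (hε : IsUnit ε) (hconj : (εb : K) = σ (ε : K))
    (p : ℕ) (hp : p.Prime) (hp5 : 5 ≤ p)
    (hinert : (Ideal.span {(p : 𝓞 K)}).IsPrime)
    (hnd : ¬ (p : 𝓞 K) ∣ (ε - εb) ^ 2)
    (F : ℕ → 𝓞 K) (hF : ∀ n, (ε - εb) * F n = ε ^ n - εb ^ n) :
    ¬ ((p : 𝓞 K) ^ 2 ∣ ε ^ (p ^ 2 - 1) - 1) ↔ ¬ ((p : 𝓞 K) ^ 2 ∣ F (p + 1)) := by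
  have := Fact.mk hp
  have hP : Prime (p : 𝓞 K) := (Ideal.span_singleton_prime (by exact_mod_cast hp.ne_zero)).1 hinert
  have hπ : ¬ (p : 𝓞 K) ∣ ε - εb := fun h => hnd (h.trans (dvd_pow_self _ two_ne_zero))
  obtain ⟨hfrob, hfrob'⟩ := natCast_dvd_pow_sub_conj_of_isPrime hdeg σ hconj hinert hπ
  have hn := sq_mul_conj_eq_one hdeg σ hconj (fun h => hπ (by simp [h])) hε
  have hu : (p : 𝓞 K) ∣ ε ^ (p + 1) - ε * εb := by
    rw [pow_succ', ← mul_sub]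
    exact hfrob.mul_left ε
  have hv : (p : 𝓞 K) ∣ εb ^ (p + 1) - ε * εb := by
    rw [pow_succ', mul_comm ε, ← mul_sub]
    exact hfrob'.mul_left εb
  have hodd : Odd p := hp.odd_of_ne_two (by omega)
  have huv : ε ^ (p + 1) * εb ^ (p + 1) = 1 := by
    obtain ⟨k, hk⟩ := hodd.add_one
    rw [← mul_pow, hk, ← two_mul, pow_mul, hn, one_pow]
  have hpred : Even (p - 1) := Nat.Odd.sub_odd hodd odd_one
  rw [not_iff_not]
  calc (p : 𝓞 K) ^ 2 ∣ ε ^ (p ^ 2 - 1) - 1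
      ↔ (p : 𝓞 K) ^ 2 ∣ (ε ^ (p + 1)) ^ (p - 1) - 1 := by
        rw [← pow_mul, ← Nat.sq_sub_sq, one_pow]
    _ ↔ (p : 𝓞 K) ^ 2 ∣ ε ^ (p + 1) - ε * εb :=
        sq_dvd_pow_sub_one_iff_sq_dvd_sub hP hn hu hpred
          (natCast_not_dvd_of_dvd_sub_one hP.not_isUnit hp.ne_zero dvd_rfl)
    _ ↔ (p : 𝓞 K) ^ 2 ∣ ε ^ (p + 1) - εb ^ (p + 1) :=
        (sq_dvd_sub_iff_sq_dvd_sub_of_mul_eq_one hP (mod_cast natCast_not_dvd_of_dvd_sub_one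
          hP.not_isUnit hp.ne_zero (even_iff_two_dvd.1 hpred)) huv hn hu hv).symm
    _ ↔ (p : 𝓞 K) ^ 2 ∣ F (p + 1) := by rw [← hF, hP.pow_dvd_mul_iff_of_not_dvd 2 hπ]

/-- `K` a real quadratic field, `ε` a unit with conjugate `ε̄`,
`p ≥ 5` a prime inert in `K` with `p ∤ (ε - ε̄)²`, and
`F_n = (εⁿ - ε̄ⁿ)/(ε - ε̄)`.  Then `ε^{p²-1} - 1 ≢ 0 (mod p²)` iff
`F_{p+1} ≢ 0 (mod p²)`. -/
theorem wieferich_iff_fibonacci_inert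
    (K : Type*) [Field K] [NumberField K]
    (hdeg : Module.finrank ℚ K = 2) (f : K →+* ℝ)
    (σ : K ≃ₐ[ℚ] K) (hσ : σ ≠ AlgEquiv.refl)
    (ε εb : 𝓞 K) (hε : IsUnit ε) (hconj : (εb : K) = σ (ε : K))
    (p : ℕ) (hp : p.Prime) (hp5 : 5 ≤ p)
    (hinert : (Ideal.span {(p : 𝓞 K)}).IsPrime)
    (hnd : ¬ (p : 𝓞 K) ∣ (ε - εb) ^ 2)
    (F : ℕ → 𝓞 K) (hF : ∀ n, (ε - εb) * F n = ε ^ n - εb ^ n) :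
    ¬ ((p : 𝓞 K) ^ 2 ∣ ε ^ (p ^ 2 - 1) - 1) ↔ ¬ ((p : 𝓞 K) ^ 2 ∣ F (p + 1)) :=
  wieferich_iff_fibonacci_inert_general K hdeg σ ε εb hε hconj p hp hp5 hinert hnd F hF
end

section
/- Let a, b be integers with b = ±1, and let F be the sequence F₀ = 0, F₁ = 1, F_{n+2} = a·F_{n+1} - b·F_n. For a prime p not dividing a² - 4b, if k(p) ≠ k(p²) then F_{p-(D/p)} ≢ 0 mod p², where D = a² - 4b and k(m) is the period of F mod m. -/
/-!
If `p² ∣ F N` with `N = p - (D/p)`, then `F (n + N) ≡ c F n (mod p²)` for `c = F (N + 1)`, and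
Cassini's identity gives `c² ≡ b ^ N`, so `c⁴ ≡ 1` and `k(p²) ∣ 4N`, which is prime to `p` when `p`
is odd. On the other hand `k(p) ∣ k(p²) ∣ p k(p)`: the shift by `k(p)` is `1 + pX` on pairs
`(F n, F (n + 1))`, so its `p`-th power is the identity modulo `p²`. Hence `k(p) = k(p²)`.
For `p = 2` the index is `1` and `F 1 = 1`.
-/

def IsPeriodMod (M : ℤ) (G : ℕ → ℤ) (k : ℕ) : Prop :=
  ∀ n, M ∣ G (n + k) - G n

namespace IsPeriodMod

variable {M : ℤ} {G : ℕ → ℤ} {k l : ℕ}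

theorem add (hk : IsPeriodMod M G k) (hl : IsPeriodMod M G l) : IsPeriodMod M G (k + l) := by
  intro n
  have h := dvd_add (hl (n + k)) (hk n)
  rwa [sub_add_sub_cancel, add_assoc] at h

theorem mul (hk : IsPeriodMod M G k) (q : ℕ) : IsPeriodMod M G (k * q) := by
  induction q with
  | zero => intro n; simp
  | succ q ih => rw [Nat.mul_succ]; exact ih.add hk

theorem of_add (hkl : IsPeriodMod M G (k + l)) (hl : IsPeriodMod M G l) : IsPeriodMod M G k := by
  intro n
  have h := dvd_sub (hkl n) (hl (n + k))
  rwa [← add_assoc, sub_sub_sub_cancel_left] at h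

theorem of_dvd {N : ℤ} (hk : IsPeriodMod M G k) (hNM : N ∣ M) : IsPeriodMod N G k :=
  fun n => hNM.trans (hk n)

theorem dvd_of_isLeast {d : ℕ} (hk : IsPeriodMod M G k)
    (hd : IsLeast {k | 0 < k ∧ IsPeriodMod M G k} d) : d ∣ k := by
  have hmod : IsPeriodMod M G (k % d) := by
    rw [← Nat.mod_add_div k d] at hk
    exact hk.of_add (hd.1.2.mul _)
  by_contra hkd
  have hpos : 0 < k % d := Nat.pos_of_ne_zero fun h => hkd (Nat.dvd_of_mod_eq_zero h)
  exact absurd (hd.2 ⟨hpos, hmod⟩) (Nat.not_le.mpr (Nat.mod_lt k hd.1.1))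

end IsPeriodMod

theorem dvd_sub_pow_mul_of_forall_dvd_sub_mul {M c : ℤ} {G : ℕ → ℤ} {k : ℕ}
    (h : ∀ n, M ∣ G (n + k) - c * G n) (j n : ℕ) : M ∣ G (n + j * k) - c ^ j * G n := by
  induction j with
  | zero => simp
  | succ j ih =>
    have hstep := dvd_add (h (n + j * k)) (ih.mul_left c)
    rwa [add_assoc, ← Nat.succ_mul, mul_sub, ← mul_assoc, ← pow_succ', sub_add_sub_cancel] at hstep

def SatisfiesLucasRec (a b : ℤ) (G : ℕ → ℤ) : Prop :=
  ∀ n, G (n + 2) = a * G (n + 1) - b * G n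

structure IsLucasSeq (a b : ℤ) (F : ℕ → ℤ) : Prop where
  apply_zero : F 0 = 0
  apply_one : F 1 = 1
  recurrence : SatisfiesLucasRec a b F

namespace IsLucasSeq

variable {a b : ℤ} {F : ℕ → ℤ}

theorem apply_two (hF : IsLucasSeq a b F) : F 2 = a := by
  simpa [hF.apply_zero, hF.apply_one] using hF.recurrence 0

/-- `F (m + 1) - a * F m` is `-b * F (m - 1)`, written without `m - 1`. -/
theorem eq_of_satisfiesLucasRec (hF : IsLucasSeq a b F) {G : ℕ → ℤ}
    (hG : SatisfiesLucasRec a b G) (m : ℕ) :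
    G m = G 1 * F m + G 0 * (F (m + 1) - a * F m) := by
  induction m using Nat.twoStepInduction with
  | zero => simp [hF.apply_zero, hF.apply_one]
  | one => simp [hF.apply_one, hF.apply_two]
  | more m ih ih' =>
    rw [hG, ih, ih', show m + 2 + 1 = m + 1 + 2 from rfl, hF.recurrence (m + 1),
      hF.recurrence m]
    ring

theorem add_eq (hF : IsLucasSeq a b F) (m n : ℕ) :
    F (m + n) = F (n + 1) * F m + F n * (F (m + 1) - a * F m) := by
  have hG : SatisfiesLucasRec a b (fun m => F (m + n)) := fun m => by
    simp only [Nat.add_right_comm m _ n]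
    exact hF.recurrence (m + n)
  simpa [Nat.add_comm 1 n] using hF.eq_of_satisfiesLucasRec hG m

theorem dvd_of_satisfiesLucasRec (hF : IsLucasSeq a b F) {G : ℕ → ℤ} {M : ℤ}
    (hG : SatisfiesLucasRec a b G) (h0 : M ∣ G 0) (h1 : M ∣ G 1) (m : ℕ) : M ∣ G m := by
  rw [hF.eq_of_satisfiesLucasRec hG m]
  exact dvd_add (h1.mul_right _) (h0.mul_right _)

theorem dvd_add_sub_mul (hF : IsLucasSeq a b F) {M c : ℤ} {k : ℕ} (hk : M ∣ F k)
    (hk1 : M ∣ F (k + 1) - c) (n : ℕ) : M ∣ F (n + k) - c * F n := by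
  have hG : SatisfiesLucasRec a b (fun n => F (n + k) - c * F n) := fun n => by
    simp only [Nat.add_right_comm n _ k, hF.recurrence (n + k), hF.recurrence n]
    ring
  exact hF.dvd_of_satisfiesLucasRec hG (by simpa [hF.apply_zero] using hk)
    (by simpa [hF.apply_one, Nat.add_comm 1 k] using hk1) n

theorem isPeriodMod_iff (hF : IsLucasSeq a b F) {M : ℤ} {k : ℕ} :
    IsPeriodMod M F k ↔ M ∣ F k ∧ M ∣ F (k + 1) - 1 :=
  ⟨fun h => ⟨by simpa [hF.apply_zero] using h 0,
      by simpa [hF.apply_one, Nat.add_comm 1 k] using h 1⟩,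
    fun ⟨hk, hk1⟩ n => by simpa using hF.dvd_add_sub_mul hk hk1 n⟩

/-- Cassini's identity, in the form that also holds at `n = 0`. -/
theorem cassini (hF : IsLucasSeq a b F) (n : ℕ) :
    F (n + 1) ^ 2 - a * F n * F (n + 1) + b * F n ^ 2 = b ^ n := by
  induction n with
  | zero => simp [hF.apply_zero, hF.apply_one]
  | succ n ih => linear_combination b * ih + (F (n + 2) - b * F n) * hF.recurrence n

theorem isPeriodMod_four_mul (hF : IsLucasSeq a b F) (hb : IsUnit b) {M : ℤ} {N : ℕ}
    (hN : M ∣ F N) : IsPeriodMod M F (4 * N) := by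
  set c := F (N + 1)
  have hc2 : M ∣ c ^ 2 - b ^ N := by
    rw [show c ^ 2 - b ^ N = F N * (a * c - b * F N) by linear_combination hF.cassini N]
    exact hN.mul_right _
  have hc4 : M ∣ c ^ 4 - 1 := by
    have hbN : (b ^ N) ^ 2 = 1 := by rw [← pow_mul, mul_comm, pow_mul, Int.isUnit_sq hb, one_pow]
    rw [show c ^ 4 - 1 = (c ^ 2 - b ^ N) * (c ^ 2 + b ^ N) by linear_combination hbN]
    exact hc2.mul_right _
  intro n
  have h4 := dvd_sub_pow_mul_of_forall_dvd_sub_mul (hF.dvd_add_sub_mul hN (sub_self c ▸ dvd_zero M)) 4 n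
  rw [show F (n + 4 * N) - F n = (F (n + 4 * N) - c ^ 4 * F n) + (c ^ 4 - 1) * F n by ring]
  exact dvd_add h4 (hc4.mul_right _)

/-- The shift by a period mod `M` acts on pairs `(F n, F (n + 1))` as `1 + M X`, so modulo `M ^ 2`
its `j`-th power is `1 + j M X`. -/
theorem sq_dvd_mul_period (hF : IsLucasSeq a b F) {M : ℤ} {k : ℕ} (hk : IsPeriodMod M F k)
    (j : ℕ) : M ^ 2 ∣ F (j * k) - j * F k ∧ M ^ 2 ∣ F (j * k + 1) - 1 - j * (F (k + 1) - 1) := by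
  obtain ⟨hx, hy⟩ := hF.isPeriodMod_iff.mp hk
  set x := F k
  set y := F (k + 1) - 1
  have hxx : M ^ 2 ∣ x * x := sq M ▸ mul_dvd_mul hx hx
  have hxy : M ^ 2 ∣ x * y := sq M ▸ mul_dvd_mul hx hy
  have hyy : M ^ 2 ∣ y * y := sq M ▸ mul_dvd_mul hy hy
  induction j with
  | zero => simp [hF.apply_zero, hF.apply_one]
  | succ j ih =>
    obtain ⟨hU, hV⟩ := ih
    set U := F (j * k)
    set V := F (j * k + 1)
    constructor
    · have e : F ((j + 1) * k) - (j + 1 : ℕ) * x = (U - j * x) * (1 + y - a * x)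
          + (V - 1 - j * y) * x + j * (2 * (x * y) - a * (x * x)) := by
        rw [Nat.succ_mul, hF.add_eq]; push_cast; ring
      rw [e]
      exact dvd_add (dvd_add (hU.mul_right _) (hV.mul_right _))
        (dvd_mul_of_dvd_right (dvd_sub (hxy.mul_left 2) (hxx.mul_left a)) _)
    · have e : F ((j + 1) * k + 1) - 1 - (j + 1 : ℕ) * y = (V - 1 - j * y) * (1 + y)
          - b * (U - j * x) * x + j * (y * y - b * (x * x)) := by
        rw [Nat.succ_mul, add_assoc, hF.add_eq, hF.recurrence]; push_cast; ring
      rw [e]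
      exact dvd_add (dvd_sub (hV.mul_right _) ((hU.mul_left b).mul_right x))
        (dvd_mul_of_dvd_right (dvd_sub hyy (hxx.mul_left b)) _)

theorem isPeriodMod_sq_mul (hF : IsLucasSeq a b F) {m k : ℕ} (hk : IsPeriodMod m F k) :
    IsPeriodMod ((m : ℤ) ^ 2) F (m * k) := by
  obtain ⟨hx, hy⟩ := hF.isPeriodMod_iff.mp hk
  obtain ⟨hU, hV⟩ := hF.sq_dvd_mul_period hk m
  have hmx : (m : ℤ) ^ 2 ∣ m * F k := sq (m : ℤ) ▸ mul_dvd_mul_left _ hx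
  have hmy : (m : ℤ) ^ 2 ∣ m * (F (k + 1) - 1) := sq (m : ℤ) ▸ mul_dvd_mul_left _ hy
  refine hF.isPeriodMod_iff.mpr ⟨?_, ?_⟩
  · simpa using dvd_add hU hmx
  · simpa [Nat.mul_succ] using dvd_add hV hmy

theorem period_eq_of_sq_dvd (hF : IsLucasSeq a b F) (hb : IsUnit b) {m N kp kp2 : ℕ}
    (hkp : IsLeast {k | 0 < k ∧ IsPeriodMod m F k} kp)
    (hkp2 : IsLeast {k | 0 < k ∧ IsPeriodMod ((m : ℤ) ^ 2) F k} kp2)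
    (hN : (m : ℤ) ^ 2 ∣ F N) (hmN : Nat.Coprime m (4 * N)) : kp = kp2 := by
  have hkp2_dvd : kp2 ∣ 4 * N := (hF.isPeriodMod_four_mul hb hN).dvd_of_isLeast hkp2
  have hkp_dvd : kp ∣ kp2 := (hkp2.1.2.of_dvd (dvd_pow_self _ two_ne_zero)).dvd_of_isLeast hkp
  have hkp2_dvd_mul : kp2 ∣ m * kp := (hF.isPeriodMod_sq_mul hkp.1.2).dvd_of_isLeast hkp2
  exact hkp_dvd.antisymm ((hmN.coprime_dvd_right hkp2_dvd).symm.dvd_of_dvd_mul_left hkp2_dvd_mul)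

end IsLucasSeq

theorem legendreSym_two_eq_one {D : ℤ} (hD : ¬ (2 : ℤ) ∣ D) : legendreSym 2 D = 1 :=
  quadraticChar_eq_one_of_char_two (ZMod.ringChar_zmod_n 2)
    (by rwa [Ne, ZMod.intCast_zmod_eq_zero_iff_dvd])

theorem coprime_four_mul_toNat_sub_legendreSym {p : ℕ} [Fact p.Prime] (hp2 : p ≠ 2) {D : ℤ}
    (hD : ¬ (p : ℤ) ∣ D) : Nat.Coprime p (4 * ((p : ℤ) - legendreSym p D).toNat) := by
  have hp : p.Prime := Fact.out
  have hε := legendreSym.eq_one_or_neg_one p (a := D)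
    (by rwa [Ne, ZMod.intCast_zmod_eq_zero_iff_dvd])
  rw [hp.coprime_iff_not_dvd]
  intro h
  have h4ε : (p : ℤ) ∣ 4 * legendreSym p D := by
    have h' : (p : ℤ) ∣ 4 * ((p : ℤ) - legendreSym p D) := by
      have := Int.natCast_dvd_natCast.mpr h
      rwa [Nat.cast_mul, Int.toNat_of_nonneg
        (by have := hp.pos; rcases hε with h | h <;> rw [h] <;> omega)] at this
    simpa [mul_sub] using (dvd_mul_left (p : ℤ) 4).sub h'
  have h4 : (p : ℤ) ∣ 4 := by
    rcases hε with h | h <;> rw [h] at h4ε <;> simpa using h4ε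
  have h4 : p ∣ 2 ^ 2 := by exact_mod_cast h4
  exact hp2 ((Nat.prime_dvd_prime_iff_eq hp Nat.prime_two).mp (hp.dvd_of_dvd_pow h4))

/-- for the generalized Fibonacci sequence with `b = ±1` and
`D = a² - 4b`, and a prime `p ∤ D`, if the minimal period of `F` mod `p`
differs from the minimal period mod `p²`, then `F_{p-(D/p)} ≢ 0 (mod p²)`. -/
theorem period_change_implies_not_wieferich (a b : ℤ) (hb : b = 1 ∨ b = -1)
    (F : ℕ → ℤ) (h0 : F 0 = 0) (h1 : F 1 = 1)
    (hrec : ∀ n, F (n + 2) = a * F (n + 1) - b * F n)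
    (p : ℕ) (hp : p.Prime) (hpD : ¬ (p : ℤ) ∣ (a ^ 2 - 4 * b))
    (kp kp2 : ℕ)
    (hkp : IsLeast {k : ℕ | 0 < k ∧ ∀ n, (p : ℤ) ∣ F (n + k) - F n} kp)
    (hkp2 : IsLeast {k : ℕ | 0 < k ∧ ∀ n, ((p : ℤ) ^ 2) ∣ F (n + k) - F n} kp2)
    (hne : kp ≠ kp2) :
    ¬ (p : ℤ) ^ 2 ∣ F (((p : ℤ) - @legendreSym p ⟨hp⟩ (a ^ 2 - 4 * b)).toNat) := by
  have : Fact p.Prime := ⟨hp⟩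
  have hF : IsLucasSeq a b F := ⟨h0, h1, hrec⟩
  intro hN
  rcases eq_or_ne p 2 with rfl | hp2
  · rw [legendreSym_two_eq_one hpD] at hN
    norm_num [h1] at hN
  · exact hne (hF.period_eq_of_sq_dvd (Int.isUnit_iff.mpr hb) hkp hkp2 hN
      (coprime_four_mul_toNat_sub_legendreSym hp2 hpD))
end

section
/- Let ε be a unit with conjugate ε̄ in the ring of integers of a real quadratic field, F_n = (εⁿ - ε̄ⁿ)/(ε - ε̄), and p an odd prime not dividing (ε - ε̄)². If p splits and F_{p-1} ≡ 0 mod p², or if p is inert and F_{p+1} ≡ 0 mod p², then ε^{p^r - 1} ≡ 1 mod p², where r = 1 in the split case and r = 2 in the inert case. -/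
/-! Since `ε ε̄ = N(ε) = ±1`, for even `n` the hypothesis `p² ∣ F_n` gives
`ε^{2n} - 1 = εⁿ (εⁿ - ε̄ⁿ) + ((ε ε̄)ⁿ - 1) ≡ 0 mod p²`. For `n = p + 1` this suffices, as
`2(p + 1) ∣ p² - 1`. For `n = p - 1` with `(p) = P Q` split, both residue fields are `𝔽_p`, so
`p ∣ A := ε^{p-1} - 1`; then `p² ∣ A (A + 2) = A² + 2A` forces `p² ∣ 2A`, hence `p² ∣ A`. -/

open NumberField Ideal

section Congruences

variable {R : Type*} [CommRing R]

theorem natCast_dvd_of_dvd_two_mul {n : ℕ} (hn : Odd n) {a : R} (h : (n : R) ∣ 2 * a) :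
    (n : R) ∣ a :=
  (Nat.coprime_two_right.mpr hn).cast.dvd_of_dvd_mul_left (by exact_mod_cast h)

theorem sq_dvd_sub_one_of_dvd_sub_one {n : ℕ} (hn : Odd n) {a : R} (h₁ : (n : R) ∣ a - 1)
    (h₂ : (n : R) ^ 2 ∣ a ^ 2 - 1) : (n : R) ^ 2 ∣ a - 1 := by
  have h : ((n ^ 2 : ℕ) : R) ∣ 2 * (a - 1) := by
    push_cast
    convert h₂.sub (pow_dvd_pow_of_dvd h₁ 2) using 1
    ring
  exact_mod_cast natCast_dvd_of_dvd_two_mul hn.pow h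

theorem dvd_pow_sq_sub_one_of_dvd_pow_sub_pow {a b d : R} (hab : (a * b) ^ 2 = 1) {n : ℕ}
    (hn : Even n) (h : d ∣ a ^ n - b ^ n) : d ∣ (a ^ n) ^ 2 - 1 := by
  obtain ⟨m, rfl⟩ := hn
  have hprod : (a * b) ^ (m + m) = 1 := by rw [← two_mul, pow_mul, hab, one_pow]
  have : (a ^ (m + m)) ^ 2 - 1 = a ^ (m + m) * (a ^ (m + m) - b ^ (m + m)) := by
    linear_combination hprod
  exact this ▸ h.mul_left _

end Congruences

theorem Odd.add_one_mul_two_dvd_sq_sub_one {p : ℕ} (hp : Odd p) : (p + 1) * 2 ∣ p ^ 2 - 1 := by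
  obtain ⟨t, rfl⟩ := hp
  exact ⟨t, Nat.sub_eq_of_eq_add (by ring)⟩

theorem Algebra.IsQuadraticExtension.algebraMap_norm_eq_mul {F K : Type*} [Field F] [Field K]
    [Algebra F K] [Algebra.IsQuadraticExtension F K] [Algebra.IsSeparable F K]
    {σ : K ≃ₐ[F] K} (hσ : σ ≠ 1) (x : K) :
    algebraMap F K (Algebra.norm F x) = x * σ x := by
  classical
  have huniv : (Finset.univ : Finset (K ≃ₐ[F] K)) = {1, σ} := by
    refine (Finset.eq_univ_of_card _ ?_).symm
    rw [Finset.card_pair hσ.symm, ← Nat.card_eq_fintype_card, IsGalois.card_aut_eq_finrank,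
      finrank_eq_two]
  rw [Algebra.norm_eq_prod_automorphisms, huniv, Finset.prod_pair hσ.symm]
  rfl

theorem NumberField.mul_conj_sq_eq_one {K : Type*} [Field K] [NumberField K]
    (hdeg : Module.finrank ℚ K = 2) {σ : K ≃ₐ[ℚ] K} (hσ : σ ≠ 1) {ε εb : 𝓞 K} (hε : IsUnit ε)
    (hconj : (εb : K) = σ ε) : (ε * εb) ^ 2 = 1 := by
  have : Algebra.IsQuadraticExtension ℚ K := ⟨hdeg⟩
  have hN : (RingOfIntegers.norm ℚ ε : ℚ) ^ 2 = 1 := by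
    rw [← sq_abs, isUnit_iff_norm.mp hε, one_pow]
  apply RingOfIntegers.coe_injective
  push_cast [hconj, ← Algebra.IsQuadraticExtension.algebraMap_norm_eq_mul hσ]
  simpa using congrArg (algebraMap ℚ K) hN

theorem Ideal.pow_card_quot_sub_one_sub_one_mem {R : Type*} [CommRing R] {P : Ideal R}
    [P.IsMaximal] [Finite (R ⧸ P)] {x : R} (hx : x ∉ P) :
    x ^ (Nat.card (R ⧸ P) - 1) - 1 ∈ P := by
  let := Ideal.Quotient.field P
  have := Fintype.ofFinite (R ⧸ P)
  have hx' : Ideal.Quotient.mk P x ≠ 0 := by rwa [ne_eq, Ideal.Quotient.eq_zero_iff_mem]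
  rw [← Ideal.Quotient.eq_zero_iff_mem, map_sub, map_pow, map_one, Nat.card_eq_fintype_card,
    FiniteField.pow_card_sub_one_eq_one _ hx', sub_self]

theorem Ideal.absNorm_eq_of_span_natCast_eq_mul {S : Type*} [CommRing S] [IsDedekindDomain S]
    [Module.Free ℤ S] [Module.Finite ℤ S] (hrank : Module.finrank ℤ S = 2) {p : ℕ}
    (hp : p.Prime) {P Q : Ideal S} (hP : P ≠ ⊤) (hQ : Q ≠ ⊤) (h : span {(p : S)} = P * Q) :
    absNorm P = p := by
  have hmul : absNorm P * absNorm Q = p ^ 2 := by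
    rw [← map_mul, ← h, absNorm_span_natCast, hrank]
  exact ((hp.mul_eq_prime_sq_iff (absNorm_eq_one_iff.not.mpr hP)
    (absNorm_eq_one_iff.not.mpr hQ)).mp hmul).1

theorem NumberField.pow_sub_one_sub_one_mem_of_span_eq_mul {K : Type*} [Field K]
    [NumberField K] (hdeg : Module.finrank ℚ K = 2) {p : ℕ} (hp : p.Prime) {P Q : Ideal (𝓞 K)}
    [P.IsMaximal] (hQ : Q ≠ ⊤) (h : span {(p : 𝓞 K)} = P * Q) {x : 𝓞 K} (hx : IsUnit x) :
    x ^ (p - 1) - 1 ∈ P := by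
  have hP : P ≠ ⊤ := ‹P.IsMaximal›.ne_top
  have hcard : Nat.card (𝓞 K ⧸ P) = p := by
    rw [← Submodule.cardQuot_apply, ← absNorm_apply]
    exact absNorm_eq_of_span_natCast_eq_mul (by rw [RingOfIntegers.rank, hdeg]) hp hP hQ h
  exact hcard ▸ pow_card_quot_sub_one_sub_one_mem fun hxP ↦ hP (eq_top_of_isUnit_mem _ hxP hx)

theorem NumberField.natCast_dvd_pow_sub_one_of_span_eq_mul {K : Type*} [Field K] [NumberField K]
    (hdeg : Module.finrank ℚ K = 2) {p : ℕ} (hp : p.Prime) {P Q : Ideal (𝓞 K)} (hP : P.IsPrime)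
    (hQ : Q.IsPrime) (hPQ : P ≠ Q) (h : span {(p : 𝓞 K)} = P * Q) {x : 𝓞 K} (hx : IsUnit x) :
    (p : 𝓞 K) ∣ x ^ (p - 1) - 1 := by
  have hPQ₀ : P * Q ≠ ⊥ := by
    rw [← h, ne_eq, span_singleton_eq_bot]
    exact_mod_cast hp.ne_zero
  obtain ⟨hP₀, hQ₀⟩ := not_or.mp (mt mul_eq_bot.mpr hPQ₀)
  have := hP.isMaximal hP₀
  have := hQ.isMaximal hQ₀
  rw [← mem_span_singleton, h, mul_eq_inf_of_coprime (IsMaximal.coprime_of_ne ‹_› ‹_› hPQ)]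
  exact ⟨pow_sub_one_sub_one_mem_of_span_eq_mul hdeg hp hQ.ne_top h hx,
    pow_sub_one_sub_one_mem_of_span_eq_mul hdeg hp hP.ne_top (h.trans (mul_comm _ _)) hx⟩

theorem fib_wieferich_implies_unit_wieferich_general
    (K : Type*) [Field K] [NumberField K]
    (hdeg : Module.finrank ℚ K = 2)
    (σ : K ≃ₐ[ℚ] K) (hσ : σ ≠ AlgEquiv.refl)
    (ε εb : 𝓞 K) (hε : IsUnit ε) (hconj : (εb : K) = σ (ε : K))
    (p : ℕ) (hp : p.Prime) (hodd : p ≠ 2)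
    (F : ℕ → 𝓞 K) (hF : ∀ n, (ε - εb) * F n = ε ^ n - εb ^ n) :
    ((∃ P Q : Ideal (𝓞 K), P.IsPrime ∧ Q.IsPrime ∧ P ≠ Q ∧
        Ideal.span {(p : 𝓞 K)} = P * Q) →
      (p : 𝓞 K) ^ 2 ∣ F (p - 1) → (p : 𝓞 K) ^ 2 ∣ ε ^ (p - 1) - 1) ∧
    ((Ideal.span {(p : 𝓞 K)}).IsPrime →
      (p : 𝓞 K) ^ 2 ∣ F (p + 1) → (p : 𝓞 K) ^ 2 ∣ ε ^ (p ^ 2 - 1) - 1) := by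
  have hpodd : Odd p := hp.odd_of_ne_two hodd
  have hsq : ∀ n, Even n → (p : 𝓞 K) ^ 2 ∣ F n → (p : 𝓞 K) ^ 2 ∣ (ε ^ n) ^ 2 - 1 :=
    fun n hn hFn ↦ dvd_pow_sq_sub_one_of_dvd_pow_sub_pow (mul_conj_sq_eq_one hdeg hσ hε hconj) hn
      (hF n ▸ hFn.mul_left _)
  refine ⟨fun ⟨P, Q, hP, hQ, hPQ, hsplit⟩ hdvd ↦ ?_, fun _ hdvd ↦ ?_⟩
  · exact sq_dvd_sub_one_of_dvd_sub_one hpodd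
      (natCast_dvd_pow_sub_one_of_span_eq_mul hdeg hp hP hQ hPQ hsplit hε)
      (hsq _ (Nat.Odd.sub_odd hpodd odd_one) hdvd)
  · refine (hsq _ hpodd.add_one hdvd).trans ?_
    obtain ⟨k, hk⟩ := hpodd.add_one_mul_two_dvd_sq_sub_one
    rw [hk, ← pow_mul, pow_mul _ _ k]
    exact sub_one_dvd_pow_sub_one _ k

/-- `K` a real quadratic field, `ε` a unit with conjugate `ε̄`,
`F_n = (εⁿ - ε̄ⁿ)/(ε - ε̄)`, and `p` an odd prime with `p ∤ (ε - ε̄)²`.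
If `p` splits and `F_{p-1} ≡ 0 (mod p²)` then `ε^{p-1} ≡ 1 (mod p²)`; and if
`p` is inert and `F_{p+1} ≡ 0 (mod p²)` then `ε^{p²-1} ≡ 1 (mod p²)`. -/
theorem fib_wieferich_implies_unit_wieferich
    (K : Type*) [Field K] [NumberField K]
    (hdeg : Module.finrank ℚ K = 2) (f : K →+* ℝ)
    (σ : K ≃ₐ[ℚ] K) (hσ : σ ≠ AlgEquiv.refl)
    (ε εb : 𝓞 K) (hε : IsUnit ε) (hconj : (εb : K) = σ (ε : K))
    (p : ℕ) (hp : p.Prime) (hodd : p ≠ 2)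
    (hnd : ¬ (p : 𝓞 K) ∣ (ε - εb) ^ 2)
    (F : ℕ → 𝓞 K) (hF : ∀ n, (ε - εb) * F n = ε ^ n - εb ^ n) :
    ((∃ P Q : Ideal (𝓞 K), P.IsPrime ∧ Q.IsPrime ∧ P ≠ Q ∧
        Ideal.span {(p : 𝓞 K)} = P * Q) →
      (p : 𝓞 K) ^ 2 ∣ F (p - 1) → (p : 𝓞 K) ^ 2 ∣ ε ^ (p - 1) - 1) ∧
    ((Ideal.span {(p : 𝓞 K)}).IsPrime →
      (p : 𝓞 K) ^ 2 ∣ F (p + 1) → (p : 𝓞 K) ^ 2 ∣ ε ^ (p ^ 2 - 1) - 1) :=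
  fib_wieferich_implies_unit_wieferich_general K hdeg σ hσ ε εb hε hconj p hp hodd F hF
end
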